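/- Over the alphabet 3 = {0,1,2}, let T be the words (finite or infinite) all of whose finite prefixes contain at most as many 2s as 1s, let ↩ be the erasing operation on finite words of T (∅^↩ := ∅; (tε)^↩ := t^↩ε for ε ∈ {0,1}; (t2)^↩ := t^↩ with its last 1 replaced by 0), let E := { s ∈ T ∩ 3^{<ω} : s ≠ ∅, s contains equally many 1s and 2s, and (s↾(|s|−1))^↩ begins with the letter 1 }, and let A := {0} ∪ E ∪ { c_0 1 c_1 1 ⋯ c_k 1 : k ∈ ω, each c_j is a finite concatenation of words from {0} ∪ E, and (k > 0 or c_0 ≠ ∅) }. Let e : T ∩ 3^ω → 2^ω be e(α) := lim_n (α↾n)^↩. Then A^ω = e^{-1}(2^ω \ {10^ω}), i.e. the ω-power of A equals the set of α ∈ T ∩ 3^ω whose erasure e(α) is different from the infinite word 1000⋯. -/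

import Mathlib

open Set Classical

/-- The ω-power of a finitary language `V ⊆ α^{<ω}`. -/
def omegaPower {α : Type*} (V : Set (List α)) : Set (ℕ → α) :=
  { x | ∃ f : ℕ → ℕ, f 0 = 0 ∧ StrictMono f ∧
      ∀ k, (List.ofFn fun i : Fin (f (k + 1) - f k) => x (f k + i.val)) ∈ V }

/-- The prefix of length `l` of an infinite word. -/
def wordPrefix {α : Type*} (x : ℕ → α) (l : ℕ) : List α := List.ofFn fun i : Fin l => x i.val

/-- `T ∩ 3^{<ω}`: finite words over `3 = {0,1,2}` all of whose prefixes contain at most as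
many `2`s as `1`s. -/
def Tfin : Set (List (Fin 3)) :=
  { s | ∀ l : ℕ, (s.take l).count 2 ≤ (s.take l).count 1 }

/-- `T ∩ 3^ω`: infinite words over `3 = {0,1,2}` all of whose finite prefixes contain at
most as many `2`s as `1`s. -/
def Tinf : Set (ℕ → Fin 3) :=
  { α | ∀ l : ℕ, (wordPrefix α l).count 2 ≤ (wordPrefix α l).count 1 }

/-- Replace the first occurrence of `1` (i.e. `true`) in a binary word by `0`. -/
def replaceFirstOne : List Bool → List Bool
  | [] => []
  | true :: t => false :: t
  | false :: t => false :: replaceFirstOne t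

/-- Replace the last occurrence of `1` (i.e. `true`) in a binary word by `0`. -/
def replaceLastOne (l : List Bool) : List Bool := (replaceFirstOne l.reverse).reverse

/-- One step of the erasing operation: appending a letter `ε ∈ {0,1}` appends it to the
erased word, while appending the letter `2` replaces the last `1` of the erased word by `0`. -/
def eraseStep (acc : List Bool) (a : Fin 3) : List Bool :=
  if a = 2 then replaceLastOne acc else acc ++ [decide (a = 1)]

/-- The erasing operation `s ↦ s^↩` on finite words over `3 = {0,1,2}` (letters `0`,`1` of
the binary output are encoded as `false`,`true`): `∅^↩ = ∅`, `(tε)^↩ = t^↩ε` for `ε ∈ {0,1}`,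
and `(t2)^↩ = t^↩` with its last `1` replaced by `0`. -/
def eraseWord (s : List (Fin 3)) : List Bool := s.foldl eraseStep []

/-- `t` is a (finite) prefix of the infinite word `x`. -/
def InfPrefix {α : Type*} (t : List α) (x : ℕ → α) : Prop :=
  ∀ i : Fin t.length, t.get i = x i.val

/-- The infinite word `x` is the limit of the sequence of finite words `s`: a finite word
is a prefix of `x` iff it is a prefix of `s m` for all sufficiently large `m`. -/
def IsLimitOf (x : ℕ → Bool) (s : ℕ → List Bool) : Prop :=
  ∀ t : List Bool, InfPrefix t x ↔ ∀ᶠ m in Filter.atTop, t <+: s m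

/-- The erasure `e(α) := lim_n (α↾n)^↩` of an infinite word over `3 = {0,1,2}` (an arbitrary
value is returned if the limit does not exist; for `α ∈ T ∩ 3^ω` it always exists). -/
noncomputable def eMap (α : ℕ → Fin 3) : ℕ → Bool :=
  if h : ∃ x : ℕ → Bool, IsLimitOf x (fun m => eraseWord (wordPrefix α m)) then h.choose
  else fun _ => false

/-- The language `E`: nonempty words `s ∈ T` with equally many `1`s and `2`s such that
the erasure of `s` minus its last letter begins with the letter `1`. -/
def Elang : Set (List (Fin 3)) :=
  { s | s ∈ Tfin ∧ s ≠ [] ∧ s.count 1 = s.count 2 ∧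
      (eraseWord (s.take (s.length - 1))).head? = some true }

/-- Finite concatenations of words from `S` (the Kleene star `S*`). -/
def starSet {α : Type*} (S : Set (List α)) : Set (List α) :=
  { s | ∃ L : List (List α), (∀ u ∈ L, u ∈ S) ∧ s = L.flatten }

/-- The language `A := {0} ∪ E ∪ { c_0 1 c_1 1 ⋯ c_k 1 : each c_j ∈ ({0} ∪ E)*, and
k > 0 or c_0 ≠ ∅ }`. -/
def Alang : Set (List (Fin 3)) :=
  {[(0 : Fin 3)]} ∪ Elang ∪
    { s | ∃ (k : ℕ) (c : ℕ → List (Fin 3)),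
        (∀ j ≤ k, c j ∈ starSet ({[(0 : Fin 3)]} ∪ Elang)) ∧
        (0 < k ∨ c 0 ≠ []) ∧
        s = (List.ofFn fun j : Fin (k + 1) => c j.val ++ [(1 : Fin 3)]).flatten }

/-- The infinite binary word `10^ω = 1000⋯`. -/
noncomputable def oneZeros : ℕ → Bool := fun n => decide (n = 0)

/-!
Read `1` as a push and `2` as a pop. For `α ∈ T` the stack never underflows, and the letters `1`
of `e(α)` are the pushes of `α` that are never popped. Cutting `α` at its successive low points
splits it into atoms: `0`, a push together with everything up to its matching pop (a word of `E`),
or a push that is never popped. Erasure is additive on concatenations whose right factor is in `T`,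
so `e(α)` is the concatenation of the erasures of the atoms, namely `0⋯0` for atoms of `{0} ∪ E`
and `1` for an unpopped push. The atoms can always be regrouped into words of `A` unless they are
a single `1` followed only by atoms of `{0} ∪ E`, which is exactly the case `e(α) = 10^ω`.
Conversely, the erasure of a word of `A` starts with `0` or contains two `1`s, so it is never a
prefix of `10^ω`.
-/

theorem replaceFirstOne_append {l : List Bool} (h : true ∈ l) (r : List Bool) :
    replaceFirstOne (l ++ r) = replaceFirstOne l ++ r := by
  induction l with
  | nil => simp at h
  | cons a t ih =>
    cases a
    · simp only [List.cons_append, replaceFirstOne, ih (by simpa using h)]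
    · rfl

theorem count_true_replaceFirstOne {l : List Bool} (h : true ∈ l) :
    (replaceFirstOne l).count true + 1 = l.count true := by
  induction l with
  | nil => simp at h
  | cons a t ih =>
    cases a
    · simpa [replaceFirstOne] using ih (by simpa using h)
    · simp [replaceFirstOne]

theorem length_replaceFirstOne (l : List Bool) : (replaceFirstOne l).length = l.length := by
  induction l with
  | nil => rfl
  | cons a t ih => cases a <;> simp [replaceFirstOne, ih]

theorem replaceLastOne_append (r : List Bool) {l : List Bool} (h : true ∈ l) :
    replaceLastOne (r ++ l) = r ++ replaceLastOne l := by
  simp [replaceLastOne, replaceFirstOne_append (List.mem_reverse.2 h)]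

theorem count_true_replaceLastOne {l : List Bool} (h : true ∈ l) :
    (replaceLastOne l).count true + 1 = l.count true := by
  simpa [replaceLastOne] using count_true_replaceFirstOne (List.mem_reverse.2 h)

theorem eraseWord_append_singleton (t : List (Fin 3)) (a : Fin 3) :
    eraseWord (t ++ [a]) = eraseStep (eraseWord t) a := by
  simp [eraseWord, List.foldl_append]

theorem eraseWord_singleton_zero : eraseWord [0] = [false] := rfl

theorem eraseWord_singleton_one : eraseWord [1] = [true] := rfl

theorem length_eraseWord_add_count_two (t : List (Fin 3)) :
    (eraseWord t).length + t.count 2 = t.length := by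
  induction t using List.reverseRecOn with
  | nil => rfl
  | append_singleton t a ih =>
    rw [eraseWord_append_singleton]
    by_cases ha : a = 2
    · simp [eraseStep, ha, replaceLastOne, length_replaceFirstOne] at ih ⊢
      omega
    · simp [eraseStep, ha]
      omega

theorem mem_Tfin_take {s : List (Fin 3)} (hs : s ∈ Tfin) (l : ℕ) : s.take l ∈ Tfin := by
  intro m
  rw [List.take_take]
  exact hs _

theorem count_two_le_count_one {s : List (Fin 3)} (hs : s ∈ Tfin) : s.count 2 ≤ s.count 1 := by
  simpa using hs s.length

theorem mem_Tfin_of_append_mem_Tfin {s t : List (Fin 3)} (h : s ++ t ∈ Tfin) : s ∈ Tfin := by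
  simpa using mem_Tfin_take h s.length

theorem nil_mem_Tfin : [] ∈ Tfin := fun l => by simp

theorem append_mem_Tfin {s t : List (Fin 3)} (hs : s ∈ Tfin) (ht : t ∈ Tfin) :
    s ++ t ∈ Tfin := by
  intro l
  rcases le_total l s.length with h | h
  · rw [List.take_append_of_le_length h]
    exact hs l
  · have := ht (l - s.length)
    have := count_two_le_count_one hs
    simp only [List.take_append, List.take_of_length_le h, List.count_append]
    omega

theorem singleton_mem_Tfin {a : Fin 3} (ha : a ≠ 2) : [a] ∈ Tfin := by
  intro l
  cases l <;> simp [List.count_singleton, ha]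

theorem count_true_eraseWord {t : List (Fin 3)} (ht : t ∈ Tfin) :
    (eraseWord t).count true + t.count 2 = t.count 1 := by
  induction t using List.reverseRecOn with
  | nil => rfl
  | append_singleton t a ih =>
    have ih := ih (mem_Tfin_of_append_mem_Tfin ht)
    rw [eraseWord_append_singleton]
    by_cases ha : a = 2
    · subst ha
      have hle := count_two_le_count_one ht
      simp only [List.count_append, List.count_singleton] at hle ⊢
      have htrue : true ∈ eraseWord t := List.count_pos_iff.1 (by simp at hle; omega)
      have := count_true_replaceLastOne htrue
      simp [eraseStep]
      omega
    · fin_cases a <;> simp_all [eraseStep]; omega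

/-- Since `t ∈ T`, every `2` of `t` erases a `1` of `t` itself. -/
theorem eraseWord_append (s : List (Fin 3)) {t : List (Fin 3)} (ht : t ∈ Tfin) :
    eraseWord (s ++ t) = eraseWord s ++ eraseWord t := by
  induction t using List.reverseRecOn with
  | nil => simp [eraseWord]
  | append_singleton t a ih =>
    have htT := mem_Tfin_of_append_mem_Tfin ht
    rw [← List.append_assoc, eraseWord_append_singleton, eraseWord_append_singleton, ih htT]
    by_cases ha : a = 2
    · subst ha
      have hle := count_two_le_count_one ht
      have hcount := count_true_eraseWord htT
      simp only [List.count_append, List.count_singleton] at hle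
      have htrue : true ∈ eraseWord t := List.count_pos_iff.1 (by simp at hle; omega)
      simp [eraseStep, replaceLastOne_append _ htrue]
    · simp [eraseStep, ha]

theorem eraseWord_ne_nil {s : List (Fin 3)} (hs : s ∈ Tfin) (hne : s ≠ []) :
    eraseWord s ≠ [] := by
  intro h
  have hall : s.count 2 = s.length := by simpa [h] using length_eraseWord_add_count_two s
  have hone : s.count 1 = 0 :=
    List.count_eq_zero.2 fun h1 => by simpa using List.count_eq_length.1 hall 1 h1
  have := count_two_le_count_one hs
  exact hne (List.eq_nil_of_length_eq_zero (by omega))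

section Segments

variable {Γ : Type*} (x : ℕ → Γ)

def wordSegment (a b : ℕ) : List Γ := List.ofFn fun i : Fin (b - a) => x (a + i.val)

@[simp] theorem length_wordSegment (a b : ℕ) : (wordSegment x a b).length = b - a := by
  simp [wordSegment]

@[simp] theorem getElem_wordSegment (a b i : ℕ) (h : i < (wordSegment x a b).length) :
    (wordSegment x a b)[i] = x (a + i) := by
  simp [wordSegment]

theorem wordSegment_append {a b c : ℕ} (hab : a ≤ b) (hbc : b ≤ c) :
    wordSegment x a b ++ wordSegment x b c = wordSegment x a c := by
  apply List.ext_getElem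
  · simp; omega
  · intro i h1 h2
    simp only [List.getElem_append, length_wordSegment, getElem_wordSegment]
    split
    · rfl
    · congr 1; omega

theorem wordSegment_succ (a : ℕ) : wordSegment x a (a + 1) = [x a] := by
  simp [wordSegment]

theorem wordSegment_take (a b j : ℕ) :
    (wordSegment x a b).take j = wordSegment x a (min (a + j) b) := by
  apply List.ext_getElem
  · simp; omega
  · simp

theorem wordPrefix_eq_wordSegment (l : ℕ) : wordPrefix x l = wordSegment x 0 l := by
  simp [wordPrefix, wordSegment]

theorem wordPrefix_append_wordSegment {a b : ℕ} (hab : a ≤ b) :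
    wordPrefix x a ++ wordSegment x a b = wordPrefix x b := by
  simp only [wordPrefix_eq_wordSegment, wordSegment_append x (Nat.zero_le a) hab]

theorem wordSegment_ne_nil {a b : ℕ} (hab : a < b) : wordSegment x a b ≠ [] := by
  rw [← List.length_pos_iff]
  simp [hab]

end Segments

section Star

variable {Γ : Type*} {S M : Set (List Γ)}

theorem nil_mem_starSet : [] ∈ starSet S := ⟨[], by simp, rfl⟩

theorem mem_starSet_of_mem {u : List Γ} (hu : u ∈ S) : u ∈ starSet S :=
  ⟨[u], by simpa, by simp⟩

theorem append_mem_starSet {u v : List Γ} (hu : u ∈ starSet S) (hv : v ∈ starSet S) :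
    u ++ v ∈ starSet S := by
  obtain ⟨L, hL, rfl⟩ := hu
  obtain ⟨L', hL', rfl⟩ := hv
  exact ⟨L ++ L', by simpa using fun w hw => hw.elim (hL w) (hL' w), by simp⟩

@[elab_as_elim]
theorem starSet_induction {P : List Γ → Prop} {w : List Γ} (hw : w ∈ starSet S) (nil : P [])
    (append : ∀ u v, u ∈ S → P v → P (u ++ v)) : P w := by
  obtain ⟨L, hL, rfl⟩ := hw
  induction L with
  | nil => exact nil
  | cons u L ih => exact append u _ (hL u (by simp)) (ih fun v hv => hL v (by simp [hv]))

theorem starSet_subset (hSM : S ⊆ M) (hnil : [] ∈ M)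
    (happ : ∀ u ∈ M, ∀ v ∈ M, u ++ v ∈ M) : starSet S ⊆ M :=
  fun _ hw => starSet_induction hw hnil fun u _ hu hv => happ u (hSM hu) _ hv

end Star

structure IsFactorization {Γ : Type*} (V : Set (List Γ)) (x : ℕ → Γ) (f : ℕ → ℕ) :
    Prop where
  map_zero : f 0 = 0
  strictMono : StrictMono f
  mem : ∀ k, wordSegment x (f k) (f (k + 1)) ∈ V

namespace IsFactorization

variable {Γ : Type*} {V W : Set (List Γ)} {x : ℕ → Γ} {f : ℕ → ℕ}

theorem mem_omegaPower (h : IsFactorization V x f) : x ∈ omegaPower V :=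
  ⟨f, h.map_zero, h.strictMono, h.mem⟩

theorem mono (h : IsFactorization V x f) (hVW : V ⊆ W) : IsFactorization W x f :=
  ⟨h.map_zero, h.strictMono, fun k => hVW (h.mem k)⟩

theorem of_mem_omegaPower (h : x ∈ omegaPower V) : ∃ f, IsFactorization V x f :=
  let ⟨f, h0, hf, hV⟩ := h
  ⟨f, h0, hf, hV⟩

end IsFactorization

theorem wordSegment_mem_starSet {Γ : Type*} {S : Set (List Γ)} {x : ℕ → Γ} {c : ℕ → ℕ}
    (hc : Monotone c) {i j : ℕ} (hij : i ≤ j)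
    (h : ∀ l, i ≤ l → l < j → wordSegment x (c l) (c (l + 1)) ∈ S) :
    wordSegment x (c i) (c j) ∈ starSet S := by
  induction j, hij using Nat.le_induction with
  | base => simpa [wordSegment] using nil_mem_starSet
  | succ j hij ih =>
    rw [← wordSegment_append x (hc hij) (hc j.le_succ)]
    exact append_mem_starSet (ih fun l hl hlj => h l hl (by omega))
      (mem_starSet_of_mem (h j hij j.lt_succ_self))

theorem isFactorization_comp_iterate {Γ : Type*} {V : Set (List Γ)} {x : ℕ → Γ}
    {c next : ℕ → ℕ} {P : ℕ → Prop} (hc0 : c 0 = 0) (hc : StrictMono c) (h0 : P 0)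
    (hstep : ∀ i, P i → i < next i ∧ P (next i) ∧ wordSegment x (c i) (c (next i)) ∈ V) :
    IsFactorization V x (fun k => c (next^[k] 0)) := by
  have hP : ∀ k, P (next^[k] 0) := by
    intro k
    induction k with
    | zero => exact h0
    | succ k ih => simpa [Function.iterate_succ_apply'] using (hstep _ ih).2.1
  refine ⟨hc0, hc.comp (strictMono_nat_of_lt_succ fun k => ?_), fun k => ?_⟩
  · simpa [Function.iterate_succ_apply'] using (hstep _ (hP k)).1
  · simpa [Function.iterate_succ_apply'] using (hstep _ (hP k)).2.2

theorem exists_isLimitOf {s : ℕ → List Bool} {f : ℕ → ℕ} (hf : Monotone f)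
    (hpre : ∀ k m, f k ≤ m → s (f k) <+: s m) (hlen : ∀ k, k ≤ (s (f k)).length) :
    ∃ x, IsLimitOf x s := by
  set x : ℕ → Bool := fun n => (s (f (n + 1))).getD n false
  have hx : ∀ n m, f (n + 1) ≤ m → (s m)[n]? = some (x n) := by
    intro n m hm
    have hn : n < (s (f (n + 1))).length := hlen (n + 1)
    rw [List.prefix_iff_getElem?.1 (hpre _ _ hm) n hn]
    simp [x, List.getElem?_eq_getElem hn]
  refine ⟨x, fun t => ⟨fun ht => ?_, fun ht i => ?_⟩⟩
  · filter_upwards [Filter.eventually_ge_atTop (f t.length)] with m hm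
    refine List.prefix_iff_getElem?.2 fun i hi => ?_
    rw [hx i m ((hf (by omega)).trans hm), ← ht ⟨i, hi⟩]
    rfl
  · obtain ⟨m, hm⟩ := (ht.and (Filter.eventually_ge_atTop (f (i + 1)))).exists
    have := List.prefix_iff_getElem?.1 hm.1 i i.2
    rw [hx i m hm.2] at this
    exact (Option.some.inj this).symm

theorem isLimitOf_eMap {α : ℕ → Fin 3}
    (h : ∃ x, IsLimitOf x (fun m => eraseWord (wordPrefix α m))) :
    IsLimitOf (eMap α) (fun m => eraseWord (wordPrefix α m)) := by
  rw [eMap, dif_pos h]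
  exact h.choose_spec

namespace IsFactorization

variable {α : ℕ → Fin 3} {f : ℕ → ℕ}

theorem wordSegment_mem_Tfin (hf : IsFactorization Tfin α f) {k m : ℕ} (hkm : f k ≤ m) :
    wordSegment α (f k) m ∈ Tfin := by
  have hmf : m ≤ f m := StrictMono.id_le hf.strictMono m
  have hstar : wordSegment α (f k) (f m) ∈ Tfin :=
    starSet_subset subset_rfl nil_mem_Tfin (fun _ hu _ hv => append_mem_Tfin hu hv)
      (wordSegment_mem_starSet hf.strictMono.monotone
        (hf.strictMono.le_iff_le.1 (hkm.trans hmf)) fun l _ _ => hf.mem l)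
  have := mem_Tfin_take hstar (m - f k)
  rwa [wordSegment_take, min_eq_left (by omega), Nat.add_sub_cancel' hkm] at this

theorem mem_Tinf (hf : IsFactorization Tfin α f) : α ∈ Tinf := by
  intro m
  have := hf.wordSegment_mem_Tfin (k := 0) (m := m) (by simp [hf.map_zero])
  rw [hf.map_zero, ← wordPrefix_eq_wordSegment] at this
  exact count_two_le_count_one this

theorem eraseWord_wordPrefix_prefix (hf : IsFactorization Tfin α f) {k m : ℕ} (hkm : f k ≤ m) :
    eraseWord (wordPrefix α (f k)) <+: eraseWord (wordPrefix α m) := by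
  rw [← wordPrefix_append_wordSegment α hkm, eraseWord_append _ (hf.wordSegment_mem_Tfin hkm)]
  exact List.prefix_append _ _

theorem le_length_eraseWord_wordPrefix (hf : IsFactorization Tfin α f) (k : ℕ) :
    k ≤ (eraseWord (wordPrefix α (f k))).length := by
  induction k with
  | zero => simp
  | succ k ih =>
    have hblock := eraseWord_ne_nil (hf.mem k)
      (wordSegment_ne_nil α (hf.strictMono k.lt_succ_self))
    rw [← wordPrefix_append_wordSegment α (hf.strictMono.monotone k.le_succ),
      eraseWord_append _ (hf.mem k), List.length_append]
    have := List.length_pos_iff.2 hblock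
    omega

theorem infPrefix_eMap (hf : IsFactorization Tfin α f) (k : ℕ) :
    InfPrefix (eraseWord (wordPrefix α (f k))) (eMap α) := by
  have hlim := isLimitOf_eMap
    (exists_isLimitOf hf.strictMono.monotone (fun _ _ => hf.eraseWord_wordPrefix_prefix)
      hf.le_length_eraseWord_wordPrefix)
  exact (hlim _).2 (Filter.eventually_atTop.2 ⟨f k, fun _ => hf.eraseWord_wordPrefix_prefix⟩)

end IsFactorization

abbrev zeroOrE : Set (List (Fin 3)) := {[(0 : Fin 3)]} ∪ Elang

theorem ne_nil_of_mem_zeroOrE {w : List (Fin 3)} (hw : w ∈ zeroOrE) : w ≠ [] := by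
  rcases hw with rfl | hw
  · simp
  · exact hw.2.1

theorem zeroOrE_subset : zeroOrE ⊆ {w | w ∈ Tfin ∧ true ∉ eraseWord w} := by
  rintro w (rfl | ⟨hT, -, hbal, -⟩)
  · exact ⟨singleton_mem_Tfin (by decide), by simp [eraseWord_singleton_zero]⟩
  · have := count_true_eraseWord hT
    exact ⟨hT, List.count_eq_zero.1 (by omega)⟩

theorem starSet_zeroOrE_subset : starSet zeroOrE ⊆ {w | w ∈ Tfin ∧ true ∉ eraseWord w} :=
  starSet_subset zeroOrE_subset ⟨nil_mem_Tfin, by simp [eraseWord]⟩ fun u hu v hv =>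
    ⟨append_mem_Tfin hu.1 hv.1, by simp [eraseWord_append u hv.1, hu.2, hv.2]⟩

theorem flatMap_append_one_mem_Tfin {L : List (List (Fin 3))} (hL : ∀ d ∈ L, d ∈ Tfin) :
    L.flatMap (· ++ [1]) ∈ Tfin := by
  induction L with
  | nil => exact nil_mem_Tfin
  | cons d L ih =>
    rw [List.flatMap_cons]
    exact append_mem_Tfin (append_mem_Tfin (hL d (by simp)) (singleton_mem_Tfin (by decide)))
      (ih fun d' hd' => hL d' (by simp [hd']))

theorem eraseWord_flatMap_append_one {L : List (List (Fin 3))} (hL : ∀ d ∈ L, d ∈ Tfin) :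
    eraseWord (L.flatMap (· ++ [1])) = L.flatMap (fun d => eraseWord d ++ [true]) := by
  induction L with
  | nil => rfl
  | cons d L ih =>
    have hL' : ∀ d' ∈ L, d' ∈ Tfin := fun d' hd' => hL d' (by simp [hd'])
    rw [List.flatMap_cons, List.flatMap_cons, eraseWord_append _ (flatMap_append_one_mem_Tfin hL'),
      eraseWord_append _ (singleton_mem_Tfin (by decide)), eraseWord_singleton_one, ih hL']

theorem mem_Alang_iff {w : List (Fin 3)} :
    w ∈ Alang ↔ w ∈ zeroOrE ∨ ∃ c L, (∀ d ∈ c :: L, d ∈ starSet zeroOrE) ∧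
      (L ≠ [] ∨ c ≠ []) ∧ w = (c :: L).flatMap (· ++ [1]) := by
  refine or_congr Iff.rfl ⟨?_, ?_⟩
  · rintro ⟨k, c, hc, hk, rfl⟩
    refine ⟨c 0, List.ofFn fun j : Fin k => c (j + 1), ?_, ?_, ?_⟩
    · simpa using ⟨hc 0 (Nat.zero_le k), fun j : Fin k => hc (j + 1) (by omega)⟩
    · exact hk.imp_left fun h => by rw [Ne, List.ofFn_eq_nil_iff]; omega
    · simp [List.ofFn_succ, List.flatMap, Function.comp_def]
  · rintro ⟨c, L, hL, hne, rfl⟩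
    refine ⟨L.length, fun j => (c :: L).getD j [], fun j hj => ?_, ?_, ?_⟩ <;> dsimp only
    · rw [List.getD_eq_getElem _ _ (by simp; omega)]
      exact hL _ (List.getElem_mem _)
    · exact hne.imp_left List.length_pos_iff.2
    · simp [List.flatMap, List.ofFn_succ, ← List.ofFn_getElem_eq_map (l := L)]

theorem Alang_subset_Tfin : Alang ⊆ Tfin := by
  intro w hw
  rcases mem_Alang_iff.1 hw with hw | ⟨c, L, hL, -, rfl⟩
  · exact (zeroOrE_subset hw).1
  · exact flatMap_append_one_mem_Tfin fun d hd => (starSet_zeroOrE_subset (hL d hd)).1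

theorem count_true_le_one_and_head?_ne_of_infPrefix_oneZeros {l : List Bool}
    (h : InfPrefix l oneZeros) :
    l.count true ≤ 1 ∧ l.head? ≠ some false := by
  rcases l with _ | ⟨a, t⟩
  · simp
  have ha : a = true := by simpa [oneZeros] using h ⟨0, by simp⟩
  have ht : true ∉ t := fun hmem => by
    obtain ⟨i, hi, hti⟩ := List.getElem_of_mem hmem
    simpa [oneZeros, hti] using h ⟨i + 1, by simpa using hi⟩
  simp [ha, List.count_eq_zero.2 ht]

theorem head?_append_of_true_not_mem {l : List Bool} (hne : l ≠ []) (hl : true ∉ l)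
    (r : List Bool) : (l ++ r).head? = some false := by
  rcases l with _ | ⟨a, l⟩
  · contradiction
  · simp only [List.mem_cons, not_or] at hl
    simpa using hl.1

/-- The erasure of a word of `A` either starts with `0` or contains two `1`s. -/
theorem not_infPrefix_oneZeros_eraseWord {w : List (Fin 3)} (hw : w ∈ Alang) :
    ¬ InfPrefix (eraseWord w) oneZeros := by
  intro h
  have ⟨hcount, hhead⟩ := count_true_le_one_and_head?_ne_of_infPrefix_oneZeros h
  rcases mem_Alang_iff.1 hw with hw | ⟨c, L, hL, hne, rfl⟩
  · have ⟨hT, htrue⟩ := zeroOrE_subset hw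
    exact hhead (by simpa using
      head?_append_of_true_not_mem (eraseWord_ne_nil hT (ne_nil_of_mem_zeroOrE hw)) htrue [])
  rw [eraseWord_flatMap_append_one fun d hd => (starSet_zeroOrE_subset (hL d hd)).1]
    at hcount hhead
  rcases L with _ | ⟨d, L⟩
  · have hc' : c ≠ [] := by simpa using hne
    have ⟨hcT, hctrue⟩ := starSet_zeroOrE_subset (hL c List.mem_cons_self)
    rw [List.flatMap_cons, List.flatMap_nil, List.append_nil] at hhead
    exact hhead (head?_append_of_true_not_mem (eraseWord_ne_nil hcT hc') hctrue _)
  · simp at hcount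
    omega

theorem exists_append_one_eq_flatMap {w : List (Fin 3)}
    (hw : w ∈ starSet (insert [1] zeroOrE)) :
    ∃ c L, (∀ d ∈ c :: L, d ∈ starSet zeroOrE) ∧ w ++ [1] = (c :: L).flatMap (· ++ [1]) := by
  refine starSet_induction hw ⟨[], [], by simpa using nil_mem_starSet, rfl⟩ ?_
  rintro u v hu ⟨c, L, hL, h⟩
  rw [List.forall_mem_cons] at hL
  rcases hu with rfl | hu
  · exact ⟨[], c :: L, List.forall_mem_cons.2 ⟨nil_mem_starSet, List.forall_mem_cons.2 hL⟩,
      by simp [h]⟩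
  · exact ⟨u ++ c, L,
      List.forall_mem_cons.2 ⟨append_mem_starSet (mem_starSet_of_mem hu) hL.1, hL.2⟩, by simp [h]⟩

theorem append_one_mem_Alang {w : List (Fin 3)} (hw : w ∈ starSet (insert [1] zeroOrE))
    (hne : w ≠ []) : w ++ [1] ∈ Alang := by
  obtain ⟨c, L, hL, h⟩ := exists_append_one_eq_flatMap hw
  refine mem_Alang_iff.2 (Or.inr ⟨c, L, hL, ?_, h⟩)
  by_contra! hcL
  simp [hcL.1, hcL.2] at h
  exact hne h

theorem mem_Tinf_and_eMap_ne_oneZeros {α : ℕ → Fin 3} (h : α ∈ omegaPower Alang) :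
    α ∈ Tinf ∧ eMap α ≠ oneZeros := by
  obtain ⟨f, hf⟩ := IsFactorization.of_mem_omegaPower h
  have hfT := hf.mono Alang_subset_Tfin
  refine ⟨hfT.mem_Tinf, fun he => not_infPrefix_oneZeros_eraseWord (hf.mem 0) ?_⟩
  have := hfT.infPrefix_eMap 1
  rwa [wordPrefix_eq_wordSegment, he, ← hf.map_zero] at this

section Height

variable (α : ℕ → Fin 3)

/-- Reading `1` as a push and `2` as a pop, the height of the stack after `n` letters. -/
def height (n : ℕ) : ℤ := ((wordPrefix α n).count 1 : ℤ) - (wordPrefix α n).count 2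

def IsLowPoint (n : ℕ) : Prop := ∀ m, n ≤ m → height α n ≤ height α m

/-- The position just after the pop matching a push at `n`; `n + 1` if `α n` is not a push
or the push is never popped. -/
noncomputable def nextCut (n : ℕ) : ℕ :=
  if h : α n = 1 ∧ ∃ m, n < m ∧ height α m ≤ height α n then Nat.find h.2 else n + 1

variable {α}

theorem height_eq_add_count {a b : ℕ} (hab : a ≤ b) :
    height α b = height α a + (wordSegment α a b).count 1 - (wordSegment α a b).count 2 := by
  simp only [height, ← wordPrefix_append_wordSegment α hab, List.count_append]
  push_cast
  ring

theorem height_succ (n : ℕ) :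
    height α (n + 1) =
      height α n + ((if α n = 1 then 1 else 0) - (if α n = 2 then 1 else 0)) := by
  rw [height_eq_add_count n.le_succ, wordSegment_succ]
  split_ifs <;> simp_all [sub_eq_add_neg]

theorem isLowPoint_zero (hT : α ∈ Tinf) : IsLowPoint α 0 := fun m _ => by
  have h0 : height α 0 = 0 := by simp [height, wordPrefix]
  have := hT m
  rw [h0, height]
  omega

theorem wordSegment_mem_Tfin_of_le_height {n m : ℕ} (hnm : n ≤ m)
    (h : ∀ l, n ≤ l → l ≤ m → height α n ≤ height α l) :
    wordSegment α n m ∈ Tfin := by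
  intro j
  rw [wordSegment_take]
  have hl := height_eq_add_count (α := α) (le_min (Nat.le_add_right n j) hnm)
  have := h (min (n + j) m) (le_min (Nat.le_add_right n j) hnm) (min_le_right _ _)
  omega

theorem wordSegment_mem_Elang {n m : ℕ} (h1 : α n = 1) (hnm : n < m)
    (heq : height α m = height α n)
    (habove : ∀ l, n < l → l < m → height α n < height α l) :
    wordSegment α n m ∈ Elang := by
  have hsucc : height α (n + 1) = height α n + 1 := by simp [height_succ, h1]
  have hnm2 : n + 2 ≤ m := by
    by_contra
    obtain rfl : m = n + 1 := by omega
    omega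
  refine ⟨wordSegment_mem_Tfin_of_le_height hnm.le fun l hl hlm => ?_,
    wordSegment_ne_nil α hnm, ?_, ?_⟩
  · rcases hl.eq_or_lt with rfl | hl
    · rfl
    rcases hlm.eq_or_lt with rfl | hlm
    exacts [heq.ge, (habove l hl hlm).le]
  · have := height_eq_add_count (α := α) hnm.le
    omega
  · have hrest : wordSegment α (n + 1) (m - 1) ∈ Tfin :=
      wordSegment_mem_Tfin_of_le_height (by omega) fun l hl hlm => by
        have := habove l (by omega) (by omega)
        omega
    rw [length_wordSegment, wordSegment_take, min_eq_left (by omega),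
      ← wordSegment_append α n.le_succ (by omega : n + 1 ≤ n + (m - n - 1)), wordSegment_succ,
      h1, show n + (m - n - 1) = m - 1 by omega, eraseWord_append _ hrest]
    rfl

theorem IsLowPoint.nextCut_spec {n : ℕ} (hn : IsLowPoint α n) :
    n < nextCut α n ∧ IsLowPoint α (nextCut α n) ∧
      wordSegment α n (nextCut α n) ∈ insert [1] zeroOrE := by
  by_cases hpop : α n = 1 ∧ ∃ m, n < m ∧ height α m ≤ height α n
  · rw [nextCut, dif_pos hpop]
    obtain ⟨hlt, hle⟩ := Nat.find_spec hpop.2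
    have heq : height α (Nat.find hpop.2) = height α n := hle.antisymm (hn _ hlt.le)
    refine ⟨hlt, fun m hm => heq.symm ▸ hn m (hlt.le.trans hm), Or.inr (Or.inr ?_)⟩
    exact wordSegment_mem_Elang hpop.1 hlt heq fun l hnl hl =>
      lt_of_not_ge fun h => Nat.find_min hpop.2 hl ⟨hnl, h⟩
  · rw [nextCut, dif_neg hpop, wordSegment_succ]
    have hsucc := height_succ (α := α) n
    have hlow := hn (n + 1) n.le_succ
    have : α n = 0 ∨ α n = 1 ∨ α n = 2 := by omega
    rcases this with h0 | h1 | h2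
    · refine ⟨n.lt_succ_self, fun m hm => ?_, by simp [h0]⟩
      simp only [h0] at hsucc
      have := hn m (by omega)
      simp_all
    · refine ⟨n.lt_succ_self, fun m hm => ?_, by simp [h1]⟩
      have := not_and.1 hpop h1
      simp only [h1] at hsucc
      simp_all
    · simp [h2] at hsucc
      omega

end Height

theorem isFactorization_nextCut {α : ℕ → Fin 3} (hT : α ∈ Tinf) :
    IsFactorization (insert [1] zeroOrE) α (fun k => (nextCut α)^[k] 0) :=
  isFactorization_comp_iterate (c := id) rfl strictMono_id (isLowPoint_zero hT)
    fun _ hn => hn.nextCut_spec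

theorem insert_zeroOrE_subset_Tfin : insert [1] zeroOrE ⊆ Tfin :=
  Set.insert_subset_iff.2 ⟨singleton_mem_Tfin (by decide), fun _ hw => (zeroOrE_subset hw).1⟩

section Regrouping

variable {x : ℕ → Fin 3} {c : ℕ → ℕ}

theorem IsFactorization.mem_zeroOrE (hc : IsFactorization (insert [1] zeroOrE) x c) {i : ℕ}
    (hi : wordSegment x (c i) (c (i + 1)) ≠ [1]) : wordSegment x (c i) (c (i + 1)) ∈ zeroOrE :=
  (Set.mem_insert_iff.1 (hc.mem i)).resolve_left hi

theorem IsFactorization.wordSegment_mem_Alang (hc : IsFactorization (insert [1] zeroOrE) x c)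
    {i j : ℕ} (hij : i < j) (hj : wordSegment x (c j) (c (j + 1)) = [1]) :
    wordSegment x (c i) (c (j + 1)) ∈ Alang := by
  rw [← wordSegment_append x (hc.strictMono.monotone hij.le)
    (hc.strictMono.monotone j.le_succ), hj]
  exact append_one_mem_Alang
    (wordSegment_mem_starSet hc.strictMono.monotone hij.le fun l _ _ => hc.mem l)
    (wordSegment_ne_nil x (hc.strictMono hij))

/-- With infinitely many atoms `1`, each block runs up to the first atom `1` after its first
atom; otherwise a first block runs up to the last atom `1`, followed by single atoms. -/
theorem IsFactorization.mem_omegaPower_Alang (hc : IsFactorization (insert [1] zeroOrE) x c)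
    (h : ¬ (wordSegment x (c 0) (c 1) = [1] ∧
      ∀ i, 1 ≤ i → wordSegment x (c i) (c (i + 1)) ≠ [1])) :
    x ∈ omegaPower Alang := by
  by_cases hinf : ∀ i, ∃ j, i < j ∧ wordSegment x (c j) (c (j + 1)) = [1]
  · choose next hnext using hinf
    refine (isFactorization_comp_iterate (P := fun _ => True) (next := fun i => next i + 1)
      hc.map_zero hc.strictMono trivial fun i _ => ⟨?_, trivial, ?_⟩).mem_omegaPower
    · have := (hnext i).1
      omega
    · exact hc.wordSegment_mem_Alang (hnext i).1 (hnext i).2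
  simp only [not_forall, not_exists, not_and] at hinf
  obtain ⟨M, hM, hprefix, htail⟩ : ∃ M, 0 < M ∧ wordSegment x (c 0) (c M) ∈ Alang ∧
      ∀ j, M ≤ j → wordSegment x (c j) (c (j + 1)) ∈ zeroOrE := by
    have hlast := Nat.find_spec hinf
    rcases hN : Nat.find hinf with _ | N
    · rw [hN] at hlast
      exact ⟨1, one_pos, mem_Alang_iff.2 (Or.inl (hc.mem_zeroOrE fun h0 => h ⟨h0, hlast⟩)),
        fun j hj => hc.mem_zeroOrE (hlast j hj)⟩
    · rw [hN] at hlast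
      have hN1 : wordSegment x (c (N + 1)) (c (N + 2)) = [1] := by
        have := Nat.find_min hinf (m := N) (by omega)
        simp only [not_forall, not_not] at this
        obtain ⟨j, hj, hj1⟩ := this
        obtain rfl : j = N + 1 := by
          by_contra hne
          exact hlast j (by omega) hj1
        exact hj1
      exact ⟨N + 2, by omega, hc.wordSegment_mem_Alang N.succ_pos hN1,
        fun j hj => hc.mem_zeroOrE (hlast j (by omega))⟩
  refine (isFactorization_comp_iterate (P := fun i => i = 0 ∨ M ≤ i)
    (next := fun i => if i = 0 then M else i + 1) hc.map_zero hc.strictMono (Or.inl rfl)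
    fun i hi => ?_).mem_omegaPower
  rcases hi with rfl | hi
  · simpa [hM] using hprefix
  · have hi0 : i ≠ 0 := by omega
    simpa [hi0, hi.trans i.le_succ] using mem_Alang_iff.2 (Or.inl (htail i hi))

theorem IsFactorization.eMap_eq_oneZeros (hc : IsFactorization (insert [1] zeroOrE) x c)
    (h0 : wordSegment x (c 0) (c 1) = [1])
    (hZ : ∀ i, 1 ≤ i → wordSegment x (c i) (c (i + 1)) ≠ [1]) :
    eMap x = oneZeros := by
  have hT := hc.mono insert_zeroOrE_subset_Tfin
  funext n
  have h1n : 1 ≤ n + 1 := by omega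
  obtain ⟨hwT, hwtrue⟩ := starSet_zeroOrE_subset
    (wordSegment_mem_starSet hc.strictMono.monotone h1n fun l hl _ => hc.mem_zeroOrE (hZ l hl))
  have hsplit : eraseWord (wordPrefix x (c (n + 1))) =
      true :: eraseWord (wordSegment x (c 1) (c (n + 1))) := by
    rw [← wordPrefix_append_wordSegment x (hc.strictMono.monotone h1n), wordPrefix_eq_wordSegment,
      ← hc.map_zero, h0, eraseWord_append _ hwT]
    rfl
  have hlen := hT.le_length_eraseWord_wordPrefix (n + 1)
  have hpre := hT.infPrefix_eMap (n + 1)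
  rw [hsplit] at hlen hpre
  have := hpre ⟨n, by simpa using hlen⟩
  rcases n with _ | n
  · simpa [oneZeros] using this.symm
  · simp only [List.get_eq_getElem, List.getElem_cons_succ] at this
    rw [← this, oneZeros, decide_eq_false n.succ_ne_zero]
    exact Bool.eq_false_iff.2 fun h => hwtrue (h ▸ List.getElem_mem _)

end Regrouping

/-- `A^ω = e^{-1}(2^ω \ {10^ω})`: the ω-power of `A` is exactly the set of `α ∈ T ∩ 3^ω`
whose erasure `e(α)` differs from the word `1000⋯`. -/
theorem omegaPower_Alang :
    omegaPower Alang = { α : ℕ → Fin 3 | α ∈ Tinf ∧ eMap α ≠ oneZeros } := by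
  ext α
  refine ⟨mem_Tinf_and_eMap_ne_oneZeros, fun ⟨hT, he⟩ => ?_⟩
  have hc := isFactorization_nextCut hT
  exact hc.mem_omegaPower_Alang fun ⟨h0, h1⟩ => he (hc.eMap_eq_oneZeros h0 h1)
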